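/- Let b ≥ 2, s ≥ 1, n ≥ 2, and let P_n and P_n' each be a sequence of n points in [0,1)^s such that for each j the j-th coordinates of the points are pairwise distinct, with associated functions ψ and ψ' respectively. Then the following are equivalent: (1) for all x, y ∈ [0,1]^s, the Lebesgue integral of ψ over R(x,y) is at most the Lebesgue integral of ψ' over R(x,y); (2) C_b(k;P_n) ≤ C_b(k;P_n') for all k ∈ ℕ^s. -/

import Mathlib

/-!
Integrating `ψ` over `R(x, y)` splits, pair of points by pair of points, into products over the
coordinates of the one-dimensional weighted volumes
`F_c(x, y) = b^(1+c) / (b-1) · |{(u, v) ∈ [0,x) × [0,y) : γ_b(u, v) = c}|`.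
These are nondecreasing in `c`, so writing each `F_c` as a telescoping sum of nonnegative
increments turns the integral into `∑_k C_b(k; P_n) · w_k(x, y)` with weights `w_k(x, y) ≥ 0` that
do not depend on the point set; this gives (2) ⇒ (1). At `x = y = (b^(-k_j))_j` one has
`F_c = b^(-k) · [k ≤ c]`, so the integral equals `b^(-2|k|) · C_b(k; P_n)`; this gives (1) ⇒ (2).

Monotonicity in `c` comes from the closed form `(X - δ(X, Y)) / b^(2k)`, where
`X = b^k x ≤ Y = b^k y`, of the area of `{u < x, v < y, ⌊b^k u⌋ = ⌊b^k v⌋}`, with the defect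
`δ(X, Y) = {X} (1 - {Y})` if `⌊X⌋ = ⌊Y⌋` and `0` otherwise. It reduces to
`b (b+1) δ(bX, bY) ≤ b³ δ(X, Y) + δ(b²X, b²Y)`, an inequality about the first two base-`b` digits
of `X` and `Y`.
-/

open MeasureTheory
open scoped Classical

noncomputable def gammaB (b : ℕ) (x y : ℝ) : ℕ∞ :=
  if x = y then ⊤
  else (↑(sInf {i : ℕ | ⌊(b : ℝ) ^ i * x⌋ = ⌊(b : ℝ) ^ i * y⌋ ∧
      ⌊(b : ℝ) ^ (i + 1) * x⌋ ≠ ⌊(b : ℝ) ^ (i + 1) * y⌋}) : ℕ∞)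

noncomputable def mB {n s : ℕ} (b : ℕ) (P : Fin n → Fin s → ℝ) (k : Fin s → ℕ) (l : Fin n) : ℕ :=
  (Finset.univ.filter fun j : Fin n =>
    j ≠ l ∧ ∀ r : Fin s, (k r : ℕ∞) ≤ gammaB b (P l r) (P j r)).card

noncomputable def nB {n s : ℕ} (b : ℕ) (P : Fin n → Fin s → ℝ) (i : Fin s → ℕ) (l : Fin n) : ℕ :=
  (Finset.univ.filter fun j : Fin n =>
    j ≠ l ∧ ∀ r : Fin s, gammaB b (P l r) (P j r) = (i r : ℕ∞)).card

noncomputable def MB {n s : ℕ} (b : ℕ) (P : Fin n → Fin s → ℝ) (k : Fin s → ℕ) : ℕ :=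
  ∑ l : Fin n, mB b P k l

noncomputable def NB {n s : ℕ} (b : ℕ) (P : Fin n → Fin s → ℝ) (i : Fin s → ℕ) : ℕ :=
  ∑ l : Fin n, nB b P i l

noncomputable def CB {n s : ℕ} (b : ℕ) (P : Fin n → Fin s → ℝ) (k : Fin s → ℕ) : ℝ :=
  (b : ℝ) ^ (∑ j, k j) * (MB b P k : ℝ) / ((n : ℝ) * ((n : ℝ) - 1))

def DsetS (b s : ℕ) (i : Fin s → ℕ) : Set ((Fin s → ℝ) × (Fin s → ℝ)) :=
  {p | (∀ j, p.1 j ∈ Set.Ico (0 : ℝ) 1) ∧ (∀ j, p.2 j ∈ Set.Ico (0 : ℝ) 1) ∧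
    ∀ j, gammaB b (p.1 j) (p.2 j) = (i j : ℕ∞)}

def Rset (s : ℕ) (x y : Fin s → ℝ) : Set ((Fin s → ℝ) × (Fin s → ℝ)) :=
  (Set.univ.pi fun j => Set.Ico 0 (x j)) ×ˢ (Set.univ.pi fun j => Set.Ico 0 (y j))

noncomputable def ViS (b s : ℕ) (i : Fin s → ℕ) (x y : Fin s → ℝ) : ℝ :=
  (volume (Rset s x y ∩ DsetS b s i)).toReal

noncomputable def psi {n s : ℕ} (b : ℕ) (P : Fin n → Fin s → ℝ) (x y : Fin s → ℝ) : ℝ :=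
  if ∀ j, gammaB b (x j) (y j) ≠ ⊤ then
    (NB b P (fun j => (gammaB b (x j) (y j)).toNat) : ℝ) *
      (b : ℝ) ^ (s + ∑ j, (gammaB b (x j) (y j)).toNat) /
      (((b : ℝ) - 1) ^ s * ((n : ℝ) * ((n : ℝ) - 1)))
  else 0

open Set

lemma floor_eq_of_floor_natCast_mul_eq {N : ℕ} (hN : N ≠ 0) {u v : ℝ}
    (h : ⌊(N : ℝ) * u⌋ = ⌊(N : ℝ) * v⌋) : ⌊u⌋ = ⌊v⌋ := by
  have hN' : (N : ℝ) ≠ 0 := Nat.cast_ne_zero.2 hN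
  rw [← mul_div_cancel_left₀ u hN', ← mul_div_cancel_left₀ v hN', Int.floor_div_natCast,
    Int.floor_div_natCast, h]

lemma floor_eq_floor_of_mem_Ico {u v : ℝ} (hu : u ∈ Ico (0 : ℝ) 1) (hv : v ∈ Ico (0 : ℝ) 1) :
    ⌊u⌋ = ⌊v⌋ := by
  rw [Int.floor_eq_zero_iff.2 hu, Int.floor_eq_zero_iff.2 hv]

lemma floor_mul_eq_natCast_iff {B : ℝ} (hB : 0 < B) (m : ℕ) (u : ℝ) :
    ⌊B * u⌋ = m ↔ u ∈ Ico (m / B) ((m + 1) / B) := by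
  rw [Int.floor_eq_iff, mem_Ico, div_le_iff₀ hB, lt_div_iff₀ hB]
  push_cast
  constructor <;> rintro ⟨h1, h2⟩ <;> constructor <;> linarith

noncomputable def pairDefect (X Y : ℝ) : ℝ :=
  if ⌊X⌋ = ⌊Y⌋ then Int.fract X * (1 - Int.fract Y) else 0

lemma pairDefect_nonneg (X Y : ℝ) : 0 ≤ pairDefect X Y := by
  unfold pairDefect
  split_ifs
  · exact mul_nonneg (Int.fract_nonneg X) (sub_nonneg.2 (Int.fract_lt_one Y).le)
  · exact le_rfl

lemma pairDefect_add_intCast (X Y : ℝ) (n : ℤ) :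
    pairDefect (X + n) (Y + n) = pairDefect X Y := by
  simp only [pairDefect, Int.floor_add_intCast, add_left_inj, Int.fract_add_intCast]

noncomputable def unitRamp (t : ℝ) : ℝ := max (min t 1) 0

lemma sum_unitRamp_mul (N : ℕ) {X Y : ℝ} (hX : 0 ≤ X) (hXY : X ≤ Y) (hY : Y ≤ N) :
    ∑ m ∈ Finset.range N, unitRamp (X - m) * unitRamp (Y - m) = X - pairDefect X Y := by
  induction N generalizing X Y with
  | zero =>
    obtain rfl : X = 0 := by push_cast at hY; linarith
    obtain rfl : Y = 0 := by push_cast at hY; linarith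
    simp [pairDefect]
  | succ N ih =>
    rw [Finset.sum_range_succ']
    push_cast at hY ⊢
    by_cases hX1 : 1 ≤ X
    · have hshift := ih (X := X - 1) (Y := Y - 1) (by linarith) (by linarith) (by linarith)
      have hδ : pairDefect (X - 1) (Y - 1) = pairDefect X Y := by
        convert pairDefect_add_intCast X Y (-1) using 2 <;> push_cast <;> ring
      simp only [sub_sub, add_comm (1 : ℝ)] at hshift
      rw [hshift, hδ]
      simp only [unitRamp, sub_zero, min_eq_right hX1,
        min_eq_right (hX1.trans hXY), max_eq_left zero_le_one]
      ring
    · push Not at hX1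
      have htail : ∀ m ∈ Finset.range N,
          unitRamp (X - (m + 1)) * unitRamp (Y - (m + 1)) = 0 := fun m _ => by
        have : X - (m + 1) < 0 := by linarith [(m.cast_nonneg : (0 : ℝ) ≤ m)]
        simp [unitRamp, min_eq_left (by linarith : X - (m + 1) ≤ 1), max_eq_right this.le]
      rw [Finset.sum_eq_zero htail, zero_add]
      simp only [unitRamp, sub_zero, min_eq_left hX1.le, max_eq_left hX]
      have hXfl : ⌊X⌋ = 0 := Int.floor_eq_zero_iff.2 ⟨hX, hX1⟩
      by_cases hY1 : Y < 1
      · have hYfl : ⌊Y⌋ = 0 := Int.floor_eq_zero_iff.2 ⟨hX.trans hXY, hY1⟩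
        simp only [pairDefect, hXfl, hYfl, if_true, Int.fract, Int.cast_zero, sub_zero,
          min_eq_left hY1.le, max_eq_left (hX.trans hXY)]
        ring
      · push Not at hY1
        have hYfl : ⌊Y⌋ ≠ 0 := by
          have : (1 : ℤ) ≤ ⌊Y⌋ := Int.le_floor.2 (by simpa using hY1)
          omega
        simp only [pairDefect, hXfl, Ne.symm hYfl, if_false, min_eq_right hY1,
          max_eq_left zero_le_one]
        ring

lemma volume_real_Ico_inter_Ico_zero {B : ℝ} (hB : 0 < B) (m : ℕ) (z : ℝ) :
    volume.real (Ico (m / B) ((m + 1) / B) ∩ Ico 0 z) = unitRamp (B * z - m) / B := by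
  have hz : z - m / B = (B * z - m) / B := by field_simp
  rw [Ico_inter_Ico, max_eq_left (by positivity), Real.volume_real_Ico, ← min_sub_sub_right,
    add_div, add_sub_cancel_left, hz, min_div_div_right hB.le, min_comm,
    unitRamp, ← max_div_div_right hB.le, zero_div]

lemma prod_pow_one_add_div (a d : ℝ) {s : ℕ} (i : Fin s → ℕ) :
    ∏ r, a ^ (1 + i r) / d = a ^ (s + ∑ r, i r) / d ^ s := by
  rw [Finset.prod_div_distrib, Finset.prod_const, Finset.card_univ, Fintype.card_fin,
    Finset.prod_pow_eq_pow_sum, Finset.sum_add_distrib, Finset.sum_const, Finset.card_univ,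
    Fintype.card_fin, smul_eq_mul, mul_one]

section BaseB

variable {b : ℕ}

lemma floor_pow_mul_eq_of_le (hb : 0 < b) {k m : ℕ} (hkm : k ≤ m) {u v : ℝ}
    (h : ⌊(b : ℝ) ^ m * u⌋ = ⌊(b : ℝ) ^ m * v⌋) : ⌊(b : ℝ) ^ k * u⌋ = ⌊(b : ℝ) ^ k * v⌋ := by
  refine floor_eq_of_floor_natCast_mul_eq (pow_ne_zero (m - k) hb.ne') ?_
  have hsplit : ∀ w : ℝ, ((b ^ (m - k) : ℕ) : ℝ) * ((b : ℝ) ^ k * w) = (b : ℝ) ^ m * w := by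
    intro w
    rw [Nat.cast_pow, ← mul_assoc, ← pow_add, Nat.sub_add_cancel hkm]
  rwa [hsplit, hsplit]

lemma exists_floor_pow_mul_ne (hb : 2 ≤ b) {u v : ℝ} (huv : u ≠ v) :
    ∃ k : ℕ, ⌊(b : ℝ) ^ k * u⌋ ≠ ⌊(b : ℝ) ^ k * v⌋ := by
  have hpos : 0 < |u - v| := abs_pos.2 (sub_ne_zero.2 huv)
  obtain ⟨k, hk⟩ := pow_unbounded_of_one_lt |u - v|⁻¹ (by exact_mod_cast hb : (1 : ℝ) < b)
  refine ⟨k, fun h => ?_⟩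
  have hclose := Int.abs_sub_lt_one_of_floor_eq_floor h
  rw [← mul_sub, abs_mul, abs_of_pos (by positivity)] at hclose
  have := (inv_lt_iff_one_lt_mul₀ hpos).1 hk
  linarith

lemma gammaB_ne_top {u v : ℝ} (huv : u ≠ v) : gammaB b u v ≠ ⊤ := by
  simp [gammaB, huv]

lemma gammaB_eq_coe_iff (hb : 2 ≤ b) {u v : ℝ} (hu : u ∈ Ico (0 : ℝ) 1)
    (hv : v ∈ Ico (0 : ℝ) 1) (c : ℕ) :
    gammaB b u v = c ↔
      ⌊(b : ℝ) ^ c * u⌋ = ⌊(b : ℝ) ^ c * v⌋ ∧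
        ⌊(b : ℝ) ^ (c + 1) * u⌋ ≠ ⌊(b : ℝ) ^ (c + 1) * v⌋ := by
  set S := {i : ℕ | ⌊(b : ℝ) ^ i * u⌋ = ⌊(b : ℝ) ^ i * v⌋ ∧
      ⌊(b : ℝ) ^ (i + 1) * u⌋ ≠ ⌊(b : ℝ) ^ (i + 1) * v⌋}
  -- `S` has at most one element, since agreement at a level implies agreement at all lower ones
  have hmin : ∀ c ∈ S, ∀ i ∈ S, c ≤ i := fun c hc i hi => by
    by_contra! hic
    exact hi.2 (floor_pow_mul_eq_of_le (by omega) hic hc.1)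
  constructor
  · intro h
    have huv : u ≠ v := by rintro rfl; simp [gammaB] at h
    have hex := exists_floor_pow_mul_ne hb huv
    have hN0 : Nat.find hex ≠ 0 := fun h0 => by
      have := Nat.find_spec hex
      rw [h0, pow_zero, one_mul, one_mul] at this
      exact this (floor_eq_floor_of_mem_Ico hu hv)
    have hS : Nat.find hex - 1 ∈ S := by
      refine ⟨not_not.1 (Nat.find_min hex (by omega)), ?_⟩
      rw [Nat.sub_add_cancel (Nat.one_le_iff_ne_zero.2 hN0)]
      exact Nat.find_spec hex
    simp only [gammaB, if_neg huv, Nat.cast_inj] at h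
    exact h ▸ Nat.sInf_mem ⟨_, hS⟩
  · intro hc
    have huv : u ≠ v := by rintro rfl; exact hc.2 rfl
    simp only [gammaB, if_neg huv, Nat.cast_inj]
    exact le_antisymm (Nat.sInf_le hc) (le_csInf ⟨c, hc⟩ (hmin c hc))

lemma digit_inequality {d : ℕ} (hd : d < b) {U V : ℝ} (hU : 0 ≤ U) (hUV : U ≤ V)
    (hV : V < b) :
    0 ≤ b * d * (b - d) - d * (U + V) - U + U * V + pairDefect U V := by
  have hd' : (d : ℝ) + 1 ≤ b := by exact_mod_cast hd
  have hd0 : (0 : ℝ) ≤ d := d.cast_nonneg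
  have hsplit : (b : ℝ) * d * (b - d) - d * (U + V) - U + U * V =
      (U - d) * (V - d - 1) + d * (b * (b - d) - d - 1) := by ring
  have hslack : (d : ℝ) * (b - d - 1) ≤ d * (b * (b - d) - d - 1) :=
    mul_le_mul_of_nonneg_left (by nlinarith) hd0
  rw [hsplit]
  by_cases hcell : (d : ℝ) < U ∧ V < d + 1
  · -- `U` and `V` lie in the cell `[d, d + 1)`, where the defect cancels the negative product
    have hU' : ⌊U⌋ = d := Int.floor_eq_iff.2 (by push_cast; constructor <;> linarith)
    have hV' : ⌊V⌋ = d := Int.floor_eq_iff.2 (by push_cast; constructor <;> linarith)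
    simp only [pairDefect, hU', hV', if_true, Int.fract, Int.cast_natCast]
    nlinarith
  · have := pairDefect_nonneg U V
    rw [not_and_or, not_lt, not_lt] at hcell
    rcases hcell with hUd | hVd
    · rcases le_or_gt (d + 1 : ℝ) V with hVd | hVd <;> nlinarith
    · nlinarith

lemma pairDefect_scaling (hb : 0 < b) {X Y : ℝ} (hXY : X ≤ Y) :
    b * (b + 1) * pairDefect (b * X) (b * Y) ≤
      b ^ 3 * pairDefect X Y + pairDefect (b ^ 2 * X) (b ^ 2 * Y) := by
  have hb' : (0 : ℝ) < b := by exact_mod_cast hb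
  by_cases hm : ⌊(b : ℝ) * X⌋ = ⌊(b : ℝ) * Y⌋
  swap
  · simp only [pairDefect, if_neg hm, mul_zero]
    have := pairDefect_nonneg X Y
    have := pairDefect_nonneg (b ^ 2 * X) (b ^ 2 * Y)
    positivity
  have ha := floor_eq_of_floor_natCast_mul_eq hb.ne' hm
  set m := ⌊(b : ℝ) * X⌋
  set a := ⌊X⌋
  obtain ⟨d, hd⟩ : ∃ d : ℕ, m = b * a + d := by
    refine Int.eq_ofNat_of_zero_le (a := m - b * a) (Int.sub_nonneg.2 ?_) |>.imp fun d h => ?_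
    · exact Int.le_floor.2 (by push_cast; nlinarith [Int.floor_le X])
    · omega
  have hdb : d < b := by
    have : m < b * a + b := Int.floor_lt.2 (by push_cast; nlinarith [Int.lt_floor_add_one X])
    omega
  set U := (b : ℝ) * (b * X - m)
  set V := (b : ℝ) * (b * Y - m)
  have hmX : (m : ℝ) ≤ b * X := Int.floor_le _
  have hmY : (b : ℝ) * Y < m + 1 := hm ▸ Int.lt_floor_add_one _
  have key := digit_inequality hdb (U := U) (V := V) (by positivity)
    (mul_le_mul_of_nonneg_left (by nlinarith) hb'.le) (by nlinarith)
  have hU : (b : ℝ) ^ 2 * X = U + ((b * m : ℤ) : ℝ) := by push_cast; ring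
  have hV : (b : ℝ) ^ 2 * Y = V + ((b * m : ℤ) : ℝ) := by push_cast; ring
  have h0 : pairDefect X Y = (X - a) * (1 - (Y - a)) := by
    rw [pairDefect, if_pos ha, Int.fract, Int.fract, ← ha]
  have h1 : pairDefect (b * X) (b * Y) = (b * X - m) * (1 - (b * Y - m)) := by
    rw [pairDefect, if_pos hm, Int.fract, Int.fract, ← hm]
  have hm' : (m : ℝ) = b * a + d := by exact_mod_cast hd
  rw [hU, hV, pairDefect_add_intCast, h0, h1]
  simp only [U, V, hm'] at key ⊢
  -- with `d` the common first digit of `X` and `Y` after the point, the goal is `key` rearranged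
  linear_combination key

def agreeSet (b k : ℕ) (x y : ℝ) : Set (ℝ × ℝ) :=
  (Ico 0 x ×ˢ Ico 0 y) ∩ {p | ⌊(b : ℝ) ^ k * p.1⌋ = ⌊(b : ℝ) ^ k * p.2⌋}

lemma measurableSet_agreeSet (k : ℕ) (x y : ℝ) : MeasurableSet (agreeSet b k x y) :=
  (measurableSet_Ico.prod measurableSet_Ico).inter <|
    measurableSet_eq_fun (measurable_fst.const_mul _).floor (measurable_snd.const_mul _).floor

lemma volume_agreeSet_ne_top (k : ℕ) (x y : ℝ) : volume (agreeSet b k x y) ≠ ⊤ := by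
  refine ne_top_of_le_ne_top ?_ (measure_mono inter_subset_left)
  rw [Measure.volume_eq_prod, Measure.prod_prod]
  exact ENNReal.mul_ne_top measure_Ico_lt_top.ne measure_Ico_lt_top.ne

lemma agreeSet_eq_biUnion (hb : 0 < b) (k : ℕ) {x : ℝ} (hx : x ≤ 1) (y : ℝ) :
    agreeSet b k x y = ⋃ m ∈ Finset.range (b ^ k),
      (Ico (m / (b : ℝ) ^ k) ((m + 1) / (b : ℝ) ^ k) ∩ Ico 0 x) ×ˢ
        (Ico (m / (b : ℝ) ^ k) ((m + 1) / (b : ℝ) ^ k) ∩ Ico 0 y) := by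
  have hB : (0 : ℝ) < (b : ℝ) ^ k := by positivity
  ext ⟨u, v⟩
  simp only [agreeSet, mem_inter_iff, mem_prod, mem_ofPred_eq, mem_iUnion, Finset.mem_range,
    exists_prop, ← floor_mul_eq_natCast_iff hB]
  constructor
  · rintro ⟨⟨hu, hv⟩, huv⟩
    have h0 : 0 ≤ ⌊(b : ℝ) ^ k * u⌋ := Int.floor_nonneg.2 (by nlinarith [hu.1])
    have h1 : ⌊(b : ℝ) ^ k * u⌋ < ((b ^ k : ℕ) : ℤ) :=
      Int.floor_lt.2 (by push_cast; nlinarith [hu.2])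
    refine ⟨⌊(b : ℝ) ^ k * u⌋.toNat, by omega, ⟨?_, hu⟩, ⟨?_, hv⟩⟩ <;> omega
  · rintro ⟨m, -, ⟨hu, hxu⟩, ⟨hv, hyv⟩⟩
    exact ⟨⟨hxu, hyv⟩, hu.trans hv.symm⟩

lemma volume_real_agreeSet_eq_sum (hb : 0 < b) (k : ℕ) {x : ℝ} (hx : x ≤ 1) (y : ℝ) :
    volume.real (agreeSet b k x y) = ∑ m ∈ Finset.range (b ^ k),
      unitRamp ((b : ℝ) ^ k * x - m) * unitRamp ((b : ℝ) ^ k * y - m) / ((b : ℝ) ^ k) ^ 2 := by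
  have hB : (0 : ℝ) < (b : ℝ) ^ k := by positivity
  rw [agreeSet_eq_biUnion hb k hx y, measureReal_biUnion_finset ?_ ?_ ?_]
  · refine Finset.sum_congr rfl fun m _ => ?_
    rw [Measure.volume_eq_prod, measureReal_prod_prod, volume_real_Ico_inter_Ico_zero hB,
      volume_real_Ico_inter_Ico_zero hB]
    ring
  · intro m _ m' _ hmm'
    refine Set.disjoint_left.2 fun p hp hp' => hmm' ?_
    have h := (floor_mul_eq_natCast_iff hB m p.1).2 hp.1.1
    rw [(floor_mul_eq_natCast_iff hB m' p.1).2 hp'.1.1] at h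
    exact_mod_cast h.symm
  · exact fun m _ => (measurableSet_Ico.inter measurableSet_Ico).prod
      (measurableSet_Ico.inter measurableSet_Ico)
  · intro m _
    rw [Measure.volume_eq_prod, Measure.prod_prod]
    exact ENNReal.mul_ne_top (ne_top_of_le_ne_top measure_Ico_lt_top.ne
      (measure_mono inter_subset_left)) (ne_top_of_le_ne_top measure_Ico_lt_top.ne
      (measure_mono inter_subset_left))

lemma volume_real_agreeSet_comm (hb : 0 < b) (k : ℕ) {x y : ℝ} (hx : x ≤ 1) (hy : y ≤ 1) :
    volume.real (agreeSet b k x y) = volume.real (agreeSet b k y x) := by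
  simp only [volume_real_agreeSet_eq_sum hb k hx y, volume_real_agreeSet_eq_sum hb k hy x,
    mul_comm]

lemma volume_real_agreeSet (hb : 0 < b) (k : ℕ) {x y : ℝ} (hx : 0 ≤ x) (hxy : x ≤ y)
    (hy : y ≤ 1) :
    volume.real (agreeSet b k x y) =
      ((b : ℝ) ^ k * x - pairDefect ((b : ℝ) ^ k * x) ((b : ℝ) ^ k * y)) / ((b : ℝ) ^ k) ^ 2 := by
  rw [volume_real_agreeSet_eq_sum hb k (hxy.trans hy) y, ← Finset.sum_div,
    sum_unitRamp_mul (b ^ k) (by positivity) (by gcongr)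
      (by push_cast; exact mul_le_of_le_one_right (by positivity) hy)]

def gammaSet (b c : ℕ) (x y : ℝ) : Set (ℝ × ℝ) :=
  (Ico 0 x ×ˢ Ico 0 y) ∩ {p | gammaB b p.1 p.2 = c}

lemma gammaSet_eq_diff (hb : 2 ≤ b) (c : ℕ) {x y : ℝ} (hx : x ≤ 1) (hy : y ≤ 1) :
    gammaSet b c x y = agreeSet b c x y \ agreeSet b (c + 1) x y := by
  ext ⟨u, v⟩
  simp only [gammaSet, agreeSet, mem_sdiff, mem_inter_iff, mem_prod, mem_ofPred_eq]
  constructor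
  · rintro ⟨⟨hu, hv⟩, h⟩
    have := (gammaB_eq_coe_iff hb ⟨hu.1, hu.2.trans_le hx⟩ ⟨hv.1, hv.2.trans_le hy⟩ c).1 h
    tauto
  · rintro ⟨⟨⟨hu, hv⟩, h1⟩, h2⟩
    exact ⟨⟨hu, hv⟩, (gammaB_eq_coe_iff hb ⟨hu.1, hu.2.trans_le hx⟩ ⟨hv.1, hv.2.trans_le hy⟩
      c).2 ⟨h1, fun h => h2 ⟨⟨hu, hv⟩, h⟩⟩⟩

lemma measurableSet_gammaSet (hb : 2 ≤ b) (c : ℕ) {x y : ℝ} (hx : x ≤ 1) (hy : y ≤ 1) :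
    MeasurableSet (gammaSet b c x y) := by
  rw [gammaSet_eq_diff hb c hx hy]
  exact (measurableSet_agreeSet c x y).diff (measurableSet_agreeSet (c + 1) x y)

lemma volume_real_gammaSet (hb : 2 ≤ b) (c : ℕ) {x y : ℝ} (hx : x ≤ 1) (hy : y ≤ 1) :
    volume.real (gammaSet b c x y) =
      volume.real (agreeSet b c x y) - volume.real (agreeSet b (c + 1) x y) := by
  have hsub : agreeSet b (c + 1) x y ⊆ agreeSet b c x y := fun _ ⟨hp, hfloor⟩ =>
    ⟨hp, floor_pow_mul_eq_of_le (by omega) c.le_succ hfloor⟩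
  rw [gammaSet_eq_diff hb c hx hy, measureReal_sdiff hsub (measurableSet_agreeSet _ x y)
    (volume_agreeSet_ne_top c x y)]

noncomputable def weightedGammaVolume (b c : ℕ) (x y : ℝ) : ℝ :=
  (b : ℝ) ^ (1 + c) / ((b : ℝ) - 1) * volume.real (gammaSet b c x y)

lemma weightedGammaVolume_nonneg (hb : 1 ≤ b) (c : ℕ) (x y : ℝ) :
    0 ≤ weightedGammaVolume b c x y :=
  mul_nonneg (div_nonneg (by positivity) (sub_nonneg.2 (by exact_mod_cast hb)))
    measureReal_nonneg

lemma weightedGammaVolume_comm (hb : 2 ≤ b) (c : ℕ) {x y : ℝ} (hx : x ≤ 1) (hy : y ≤ 1) :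
    weightedGammaVolume b c x y = weightedGammaVolume b c y x := by
  simp only [weightedGammaVolume, volume_real_gammaSet hb c hx hy,
    volume_real_gammaSet hb c hy hx, volume_real_agreeSet_comm (b := b) (by omega) _ hx hy]

lemma weightedGammaVolume_eq (hb : 2 ≤ b) (c : ℕ) {x y : ℝ} (hx : 0 ≤ x) (hxy : x ≤ y)
    (hy : y ≤ 1) :
    weightedGammaVolume b c x y = x -
      (b ^ 2 * pairDefect ((b : ℝ) ^ c * x) ((b : ℝ) ^ c * y) -
        pairDefect ((b : ℝ) ^ (c + 1) * x) ((b : ℝ) ^ (c + 1) * y)) /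
      ((b : ℝ) ^ (c + 1) * (b - 1)) := by
  have hb1 : (b : ℝ) - 1 ≠ 0 := sub_ne_zero.2 (by norm_cast; omega)
  have hb0 : (b : ℝ) ≠ 0 := by norm_cast; omega
  rw [weightedGammaVolume, volume_real_gammaSet hb c (hxy.trans hy) hy,
    volume_real_agreeSet (by omega) c hx hxy hy, volume_real_agreeSet (by omega) (c + 1) hx hxy hy]
  field_simp
  ring

lemma weightedGammaVolume_le_succ (hb : 2 ≤ b) (c : ℕ) {x y : ℝ} (hx : x ∈ Icc (0 : ℝ) 1)
    (hy : y ∈ Icc (0 : ℝ) 1) :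
    weightedGammaVolume b c x y ≤ weightedGammaVolume b (c + 1) x y := by
  wlog hxy : x ≤ y generalizing x y
  · rw [weightedGammaVolume_comm hb c hx.2 hy.2, weightedGammaVolume_comm hb (c + 1) hx.2 hy.2]
    exact this hy hx (le_of_not_ge hxy)
  have hb' : (1 : ℝ) < b := by exact_mod_cast hb
  have key := pairDefect_scaling (b := b) (by omega) (X := b ^ c * x) (Y := b ^ c * y) (by gcongr)
  have h1 : ∀ w : ℝ, (b : ℝ) * ((b : ℝ) ^ c * w) = b ^ (c + 1) * w := fun w => by ring
  have h2 : ∀ w : ℝ, (b : ℝ) ^ 2 * ((b : ℝ) ^ c * w) = b ^ (c + 1 + 1) * w := fun w => by ring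
  rw [h1, h1, h2, h2] at key
  have hpos : (0 : ℝ) < b ^ (c + 1) * (b - 1) := mul_pos (by positivity) (by linarith)
  rw [weightedGammaVolume_eq hb c hx.1 hxy hy.2, weightedGammaVolume_eq hb (c + 1) hx.1 hxy hy.2,
    sub_le_sub_iff_left, div_le_div_iff₀ (by positivity) hpos,
    show (b : ℝ) ^ (c + 1 + 1) * (b - 1) = b ^ (c + 1) * (b - 1) * b by ring]
  linear_combination mul_le_mul_of_nonneg_left key hpos.le

lemma inv_pow_mem_Icc (hb : 1 ≤ b) (k : ℕ) : ((b : ℝ) ^ k)⁻¹ ∈ Icc (0 : ℝ) 1 :=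
  ⟨by positivity, inv_le_one_of_one_le₀ (one_le_pow₀ (by exact_mod_cast hb))⟩

lemma weightedGammaVolume_inv_pow (hb : 2 ≤ b) (k c : ℕ) :
    weightedGammaVolume b c ((b : ℝ) ^ k)⁻¹ ((b : ℝ) ^ k)⁻¹ =
      if k ≤ c then ((b : ℝ) ^ k)⁻¹ else 0 := by
  have hb' : (1 : ℝ) < b := by exact_mod_cast hb
  obtain ⟨hz0, hz1⟩ := inv_pow_mem_Icc (b := b) (by omega) k
  set z := ((b : ℝ) ^ k)⁻¹
  split_ifs with hkc
  · have hint : ∀ j, k ≤ j → pairDefect ((b : ℝ) ^ j * z) ((b : ℝ) ^ j * z) = 0 := by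
      intro j hj
      have : (b : ℝ) ^ j * z = ((b ^ (j - k) : ℕ) : ℝ) := by
        rw [Nat.cast_pow, pow_sub₀ _ (by positivity) hj]
      rw [this, pairDefect, if_pos rfl, Int.fract_natCast, zero_mul]
    rw [weightedGammaVolume_eq hb c hz0 le_rfl hz1, hint c hkc, hint (c + 1) (by omega)]
    simp
  · have hempty : gammaSet b c z z = ∅ := by
      refine eq_empty_iff_forall_notMem.2 fun ⟨u, v⟩ ⟨⟨hu, hv⟩, h⟩ => ?_
      have hfloor : ∀ w ∈ Ico 0 z, ⌊(b : ℝ) ^ (c + 1) * w⌋ = 0 := fun w hw => by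
        refine Int.floor_eq_zero_iff.2 ⟨by positivity [hw.1], ?_⟩
        calc (b : ℝ) ^ (c + 1) * w < b ^ (c + 1) * z := by gcongr; exact hw.2
          _ ≤ b ^ k * z := by gcongr; exacts [hb'.le, by omega]
          _ = 1 := mul_inv_cancel₀ (by positivity)
      exact ((gammaB_eq_coe_iff hb ⟨hu.1, hu.2.trans_le hz1⟩ ⟨hv.1, hv.2.trans_le hz1⟩ c).1
        h).2 ((hfloor u hu).trans (hfloor v hv).symm)
    rw [weightedGammaVolume, hempty, measureReal_empty, mul_zero]

noncomputable def gammaIncrement (b : ℕ) (x y : ℝ) : ℕ → ℝ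
  | 0 => weightedGammaVolume b 0 x y
  | t + 1 => weightedGammaVolume b (t + 1) x y - weightedGammaVolume b t x y

lemma gammaIncrement_nonneg (hb : 2 ≤ b) {x y : ℝ} (hx : x ∈ Icc (0 : ℝ) 1)
    (hy : y ∈ Icc (0 : ℝ) 1) : ∀ t, 0 ≤ gammaIncrement b x y t
  | 0 => weightedGammaVolume_nonneg (by omega) 0 x y
  | t + 1 => sub_nonneg.2 (weightedGammaVolume_le_succ hb t hx hy)

lemma sum_range_gammaIncrement (x y : ℝ) (c : ℕ) :
    ∑ t ∈ Finset.range (c + 1), gammaIncrement b x y t = weightedGammaVolume b c x y := by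
  induction c with
  | zero => simp [gammaIncrement]
  | succ c ih =>
    rw [Finset.sum_range_succ, ih, gammaIncrement]
    ring

lemma prod_weightedGammaVolume_eq_sum {s : ℕ} (x y : Fin s → ℝ) {N : ℕ} {c : Fin s → ℕ}
    (hc : ∀ r, c r ≤ N) :
    ∏ r, weightedGammaVolume b (c r) (x r) (y r) =
      ∑ k ∈ Fintype.piFinset fun _ => Finset.range (N + 1),
        if ∀ r, k r ≤ c r then ∏ r, gammaIncrement b (x r) (y r) (k r) else 0 := by
  have hfactor : ∀ r, weightedGammaVolume b (c r) (x r) (y r) =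
      ∑ t ∈ Finset.range (N + 1), if t ≤ c r then gammaIncrement b (x r) (y r) t else 0 := by
    intro r
    rw [← Finset.sum_filter, ← sum_range_gammaIncrement]
    congr 1
    ext t
    simp only [Finset.mem_filter, Finset.mem_range]
    have := hc r
    omega
  simp only [hfactor, Finset.prod_univ_sum, Finset.prod_ite_zero, Finset.mem_univ, true_imp_iff]

variable {n s : ℕ} {P : Fin n → Fin s → ℝ}

noncomputable def pairGamma (b : ℕ) (P : Fin n → Fin s → ℝ) (l j : Fin n) : Fin s → ℕ :=
  fun r => (gammaB b (P l r) (P j r)).toNat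

lemma gammaB_eq_pairGamma (hdist : ∀ r, Function.Injective fun i => P i r) {l j : Fin n}
    (hjl : j ≠ l) (r : Fin s) : gammaB b (P l r) (P j r) = pairGamma b P l j r :=
  (ENat.natCast_toNat (gammaB_ne_top fun h => hjl (hdist r h).symm)).symm

lemma MB_mul_eq_sum (hdist : ∀ r, Function.Injective fun i => P i r) (k : Fin s → ℕ) (a : ℝ) :
    (MB b P k : ℝ) * a = ∑ l, ∑ j ∈ Finset.univ.filter (· ≠ l),
      if ∀ r, k r ≤ pairGamma b P l j r then a else 0 := by
  simp only [MB, mB, Nat.cast_sum, Finset.sum_mul]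
  refine Finset.sum_congr rfl fun l _ => ?_
  rw [← Finset.filter_filter, Finset.card_filter, Nat.cast_sum, Finset.sum_mul]
  refine Finset.sum_congr rfl fun j hj => ?_
  simp only [gammaB_eq_pairGamma hdist (Finset.mem_filter.1 hj).2, Nat.cast_le, Nat.cast_ite,
    Nat.cast_one, Nat.cast_zero, ite_mul, one_mul, zero_mul]

lemma psi_eq_sum (hdist : ∀ r, Function.Injective fun i => P i r)
    (p : (Fin s → ℝ) × (Fin s → ℝ)) :
    psi b P p.1 p.2 = ((n : ℝ) * (n - 1))⁻¹ * ∑ l, ∑ j ∈ Finset.univ.filter (· ≠ l),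
      if ∀ r, gammaB b (p.1 r) (p.2 r) = pairGamma b P l j r then
        ∏ r, (b : ℝ) ^ (1 + pairGamma b P l j r) / ((b : ℝ) - 1) else 0 := by
  by_cases hfin : ∀ r, gammaB b (p.1 r) (p.2 r) ≠ ⊤
  · obtain ⟨i, hp⟩ : ∃ i : Fin s → ℕ, ∀ r, gammaB b (p.1 r) (p.2 r) = i r :=
      ⟨_, fun r => (ENat.natCast_toNat (hfin r)).symm⟩
    have hi : (fun r => (gammaB b (p.1 r) (p.2 r)).toNat) = i :=
      funext fun r => by rw [hp r, ENat.toNat_natCast]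
    have hterm : ∀ l, ∀ j ∈ Finset.univ.filter (· ≠ l),
        (if ∀ r, gammaB b (p.1 r) (p.2 r) = pairGamma b P l j r then
          ∏ r, (b : ℝ) ^ (1 + pairGamma b P l j r) / ((b : ℝ) - 1) else 0) =
        (if ∀ r, gammaB b (P l r) (P j r) = i r then 1 else 0) *
          ∏ r, (b : ℝ) ^ (1 + i r) / ((b : ℝ) - 1) := by
      intro l j hj
      simp only [hp, gammaB_eq_pairGamma hdist (Finset.mem_filter.1 hj).2, Nat.cast_inj]
      split_ifs with h1 h2 h2
      · simp only [one_mul, ← funext h1]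
      · exact absurd (fun r => (h1 r).symm) h2
      · exact absurd (fun r => (h2 r).symm) h1
      · rw [zero_mul]
    rw [psi, if_pos hfin, hi, Finset.sum_congr rfl fun l _ => Finset.sum_congr rfl (hterm l),
      prod_pow_one_add_div, NB]
    simp only [← Finset.sum_mul, nB, ← Finset.filter_filter, Finset.card_filter, Nat.cast_sum,
      Nat.cast_ite, Nat.cast_one, Nat.cast_zero, div_eq_mul_inv, mul_inv]
    ring
  · push Not at hfin
    obtain ⟨r₀, hr₀⟩ := hfin
    have hzero : ∀ l j, ¬ ∀ r, gammaB b (p.1 r) (p.2 r) = pairGamma b P l j r :=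
      fun l j h => ENat.top_ne_natCast _ (hr₀ ▸ h r₀)
    rw [psi, if_neg fun h => h r₀ hr₀]
    simp [hzero]

lemma volume_Rset_ne_top (x y : Fin s → ℝ) : volume (Rset s x y) ≠ ⊤ :=
  ((Bornology.IsBounded.pi fun _ => Metric.isBounded_Ico _ _).prod
    (Bornology.IsBounded.pi fun _ => Metric.isBounded_Ico _ _)).measure_lt_top.ne

lemma measurableSet_Rset (x y : Fin s → ℝ) : MeasurableSet (Rset s x y) :=
  (MeasurableSet.univ_pi fun _ => measurableSet_Ico).prod
    (MeasurableSet.univ_pi fun _ => measurableSet_Ico)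

lemma Rset_inter_DsetS_eq {x y : Fin s → ℝ} (hx : ∀ r, x r ≤ 1) (hy : ∀ r, y r ≤ 1)
    (i : Fin s → ℕ) :
    Rset s x y ∩ DsetS b s i = (MeasurableEquiv.arrowProdEquivProdArrow ℝ ℝ (Fin s)).symm ⁻¹'
      univ.pi fun r => gammaSet b (i r) (x r) (y r) := by
  ext p
  simp only [Rset, DsetS, gammaSet, mem_inter_iff, mem_prod, mem_pi, mem_univ, true_imp_iff,
    mem_preimage, mem_ofPred_eq]
  change _ ↔ ∀ r, ((p.1 r ∈ Ico 0 (x r) ∧ p.2 r ∈ Ico 0 (y r)) ∧ gammaB b (p.1 r) (p.2 r) = i r)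
  constructor
  · rintro ⟨⟨h1, h2⟩, -, -, h3⟩ r
    exact ⟨⟨h1 r, h2 r⟩, h3 r⟩
  · intro h
    exact ⟨⟨fun r => (h r).1.1, fun r => (h r).1.2⟩,
      fun r => ⟨(h r).1.1.1, (h r).1.1.2.trans_le (hx r)⟩,
      fun r => ⟨(h r).1.2.1, (h r).1.2.2.trans_le (hy r)⟩, fun r => (h r).2⟩

lemma measurableSet_Rset_inter_DsetS (hb : 2 ≤ b) {x y : Fin s → ℝ} (hx : ∀ r, x r ≤ 1)
    (hy : ∀ r, y r ≤ 1) (i : Fin s → ℕ) : MeasurableSet (Rset s x y ∩ DsetS b s i) := by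
  rw [Rset_inter_DsetS_eq hx hy]
  exact (MeasurableEquiv.measurable _) <|
    MeasurableSet.univ_pi fun r => measurableSet_gammaSet hb (i r) (hx r) (hy r)

lemma ViS_eq_prod {x y : Fin s → ℝ} (hx : ∀ r, x r ≤ 1) (hy : ∀ r, y r ≤ 1) (i : Fin s → ℕ) :
    ViS b s i x y = ∏ r, volume.real (gammaSet b (i r) (x r) (y r)) := by
  rw [ViS, Rset_inter_DsetS_eq hx hy, ((volume_measurePreserving_arrowProdEquivProdArrow ℝ ℝ
    (Fin s)).symm _).measure_preimage_equiv, volume_pi_pi, ENNReal.toReal_prod]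
  rfl

lemma integral_psi_eq_sum_prod (hb : 2 ≤ b) (hdist : ∀ r, Function.Injective fun i => P i r)
    {x y : Fin s → ℝ} (hx : ∀ r, x r ∈ Icc (0 : ℝ) 1) (hy : ∀ r, y r ∈ Icc (0 : ℝ) 1) :
    ∫ p in Rset s x y, psi b P p.1 p.2 = ((n : ℝ) * (n - 1))⁻¹ *
      ∑ l, ∑ j ∈ Finset.univ.filter (· ≠ l),
        ∏ r, weightedGammaVolume b (pairGamma b P l j r) (x r) (y r) := by
  have hx1 : ∀ r, x r ≤ 1 := fun r => (hx r).2
  have hy1 : ∀ r, y r ≤ 1 := fun r => (hy r).2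
  set W : (Fin s → ℕ) → ℝ := fun c => ∏ r, (b : ℝ) ^ (1 + c r) / ((b : ℝ) - 1)
  have hpsi : ∀ p ∈ Rset s x y, psi b P p.1 p.2 = ((n : ℝ) * (n - 1))⁻¹ *
      ∑ l, ∑ j ∈ Finset.univ.filter (· ≠ l),
        (Rset s x y ∩ DsetS b s (pairGamma b P l j)).indicator
          (fun _ => W (pairGamma b P l j)) p := by
    intro p hp
    rw [psi_eq_sum hdist]
    congr 1
    refine Finset.sum_congr rfl fun l _ => Finset.sum_congr rfl fun j _ => ?_
    have h1 : ∀ r, p.1 r ∈ Ico (0 : ℝ) 1 := fun r =>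
      ⟨(hp.1 r (mem_univ r)).1, (hp.1 r (mem_univ r)).2.trans_le (hx1 r)⟩
    have h2 : ∀ r, p.2 r ∈ Ico (0 : ℝ) 1 := fun r =>
      ⟨(hp.2 r (mem_univ r)).1, (hp.2 r (mem_univ r)).2.trans_le (hy1 r)⟩
    simp only [indicator, mem_inter_iff, hp, DsetS, mem_ofPred_eq, h1, h2, implies_true,
      true_and]
    rfl
  have : IsFiniteMeasure (volume.restrict (Rset s x y)) :=
    isFiniteMeasure_restrict.2 (volume_Rset_ne_top x y)
  rw [setIntegral_congr_fun (measurableSet_Rset x y) hpsi, integral_const_mul,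
    integral_finsetSum _ fun l _ => integrable_finsetSum _ fun j _ =>
      (integrable_const _).indicator (measurableSet_Rset_inter_DsetS hb hx1 hy1 _)]
  congr 1
  refine Finset.sum_congr rfl fun l _ => ?_
  rw [integral_finsetSum _ fun j _ =>
    (integrable_const _).indicator (measurableSet_Rset_inter_DsetS hb hx1 hy1 _)]
  refine Finset.sum_congr rfl fun j _ => ?_
  rw [setIntegral_indicator (measurableSet_Rset_inter_DsetS hb hx1 hy1 _),
    inter_eq_right.2 inter_subset_left, setIntegral_const, smul_eq_mul]
  change ViS b s _ x y * _ = _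
  rw [ViS_eq_prod hx1 hy1, ← Finset.prod_mul_distrib]
  exact Finset.prod_congr rfl fun r _ => mul_comm _ _

lemma CB_eq_integral_psi (hb : 2 ≤ b) (hdist : ∀ r, Function.Injective fun i => P i r)
    (k : Fin s → ℕ) :
    CB b P k = (b : ℝ) ^ (2 * ∑ r, k r) *
      ∫ p in Rset s (fun r => ((b : ℝ) ^ k r)⁻¹) (fun r => ((b : ℝ) ^ k r)⁻¹), psi b P p.1 p.2 := by
  have hb0 : (b : ℝ) ≠ 0 := by norm_cast; omega
  have hz r := inv_pow_mem_Icc (b := b) (by omega) (k r)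
  simp only [integral_psi_eq_sum_prod hb hdist hz hz, weightedGammaVolume_inv_pow hb,
    Finset.prod_ite_zero, Finset.mem_univ, true_imp_iff, ← MB_mul_eq_sum hdist,
    Finset.prod_inv_distrib, Finset.prod_pow_eq_pow_sum, CB]
  rw [pow_mul', sq]
  field_simp

lemma integral_psi_eq_sum_CB (hb : 2 ≤ b) (hdist : ∀ r, Function.Injective fun i => P i r)
    {x y : Fin s → ℝ} (hx : ∀ r, x r ∈ Icc (0 : ℝ) 1) (hy : ∀ r, y r ∈ Icc (0 : ℝ) 1) {N : ℕ}
    (hN : ∀ l j r, pairGamma b P l j r ≤ N) :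
    ∫ p in Rset s x y, psi b P p.1 p.2 =
      ∑ k ∈ Fintype.piFinset fun _ => Finset.range (N + 1),
        CB b P k * ∏ r, gammaIncrement b (x r) (y r) (k r) / (b : ℝ) ^ k r := by
  have hb0 : (b : ℝ) ≠ 0 := by norm_cast; omega
  simp only [integral_psi_eq_sum_prod hb hdist hx hy, prod_weightedGammaVolume_eq_sum x y (hN _ _)]
  rw [Finset.sum_congr rfl fun l _ => Finset.sum_comm, Finset.sum_comm, Finset.mul_sum]
  refine Finset.sum_congr rfl fun k _ => ?_
  rw [← MB_mul_eq_sum hdist, CB, Finset.prod_div_distrib, Finset.prod_pow_eq_pow_sum]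
  field_simp

end BaseB

theorem stmt17_general (b n s : ℕ) (hb : 2 ≤ b)
    (P P' : Fin n → Fin s → ℝ)
    (hdist : ∀ j : Fin s, Function.Injective fun i => P i j)
    (hdist' : ∀ j : Fin s, Function.Injective fun i => P' i j) :
    (∀ x y : Fin s → ℝ, (∀ j, x j ∈ Set.Icc (0 : ℝ) 1) → (∀ j, y j ∈ Set.Icc (0 : ℝ) 1) →
        (∫ p in Rset s x y, psi b P p.1 p.2) ≤ ∫ p in Rset s x y, psi b P' p.1 p.2) ↔
      ∀ k : Fin s → ℕ, CB b P k ≤ CB b P' k := by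
  constructor
  · intro h k
    have hz r := inv_pow_mem_Icc (b := b) (by omega) (k r)
    rw [CB_eq_integral_psi hb hdist, CB_eq_integral_psi hb hdist']
    exact mul_le_mul_of_nonneg_left (h _ _ hz hz) (by positivity)
  · intro h x y hx hy
    obtain ⟨N, hN⟩ := Finite.exists_le fun t : Fin n × Fin n × Fin s =>
      max (pairGamma b P t.1 t.2.1 t.2.2) (pairGamma b P' t.1 t.2.1 t.2.2)
    rw [integral_psi_eq_sum_CB hb hdist hx hy fun l j r => (le_max_left _ _).trans (hN (l, j, r)),
      integral_psi_eq_sum_CB hb hdist' hx hy fun l j r => (le_max_right _ _).trans (hN (l, j, r))]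
    exact Finset.sum_le_sum fun k _ => mul_le_mul_of_nonneg_right (h k) <|
      Finset.prod_nonneg fun r _ => div_nonneg (gammaIncrement_nonneg hb (hx r) (hy r) _)
        (by positivity)

theorem stmt17 (b n s : ℕ) (hb : 2 ≤ b) (hs : 1 ≤ s) (hn : 2 ≤ n)
    (P P' : Fin n → Fin s → ℝ)
    (hP : ∀ i j, P i j ∈ Set.Ico (0 : ℝ) 1) (hP' : ∀ i j, P' i j ∈ Set.Ico (0 : ℝ) 1)
    (hdist : ∀ j : Fin s, Function.Injective fun i => P i j)
    (hdist' : ∀ j : Fin s, Function.Injective fun i => P' i j) :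
    (∀ x y : Fin s → ℝ, (∀ j, x j ∈ Set.Icc (0 : ℝ) 1) → (∀ j, y j ∈ Set.Icc (0 : ℝ) 1) →
        (∫ p in Rset s x y, psi b P p.1 p.2) ≤ ∫ p in Rset s x y, psi b P' p.1 p.2) ↔
      ∀ k : Fin s → ℕ, CB b P k ≤ CB b P' k :=
  stmt17_general b n s hb P P' hdist hdist'
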